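/- Conditional uniformity of the particle system given its counts (Proposition 'prop-inter'(2)): Fix an integer c ≥ 1, for every l ≥ 1 a finitely supported probability vector p^l on the positive integers, and B(0) ∈ ℕ^c with ∑_{u=1}^c B(0)_u ≥ 1. Let (V_n)_{n∈ℕ} be the Markov chain with kernel κ̂ and initial law μ_{B(0)} (i.e., with law P^{κ̂}_{μ_{B(0)}}). Then for every n ∈ ℕ and every coloring v of any finite length, P(V_n = v) · |C_{Φ(v)}| = P(Φ(V_n) = Φ(v)). Equivalently, for every ℬ ∈ ℕ^c with P(Φ(V_n) = ℬ) > 0, conditional on the event {Φ(V_n) = ℬ} the coloring V_n is uniformly distributed on C_ℬ. -/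

import Mathlib

/-!
Conditional uniformity says that `V ↦ P(V_n = V)` is constant on each class `C_B`. This holds for
the initial law, and one step of `κ̂` preserves it: if it holds at time `n`, the mass reaching a
coloring `w` of length `m` from the colorings of length `l` with counts `A` is
`P(V_n ∈ C_A) / |C_A|` times `p^l(b) / binom(m, b + 1)` times the number of pairs `(x, S)` with `x ∈ C_A` and
`σ(x, S) = w`, where `b = m - l`. That number is `∑_u [Φ(w) = A + b e_u] binom(Φ(w)_u, b + 1)`,
which depends on `w` only through `Φ(w)`.
-/

open Finset MeasureTheory
open scoped ENNReal

/-- The count vector of a coloring `V : {1,…,l} → {1,…,c}`: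
`Φ(V)_u = #{i ≤ l : V_i = u}`. -/
def countVec {c l : ℕ} (V : Fin l → Fin c) : Fin c → ℕ :=
  fun u => (Finset.univ.filter fun i => V i = u).card

/-- `C_B`: the finite set of colorings of length `l` with count vector `B`. -/
def colorings {c : ℕ} (l : ℕ) (B : Fin c → ℕ) : Finset (Fin l → Fin c) :=
  Finset.univ.filter fun V => countVec V = B

/-- The rank of position `j` among the positions not in `S'`: `#{i ∉ S' : i < j}`. -/
def rankInCompl {m : ℕ} (S' : Finset (Fin m)) (j : Fin m) : ℕ :=
  ((S'ᶜ).filter fun i => i < j).card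

/-- `σ^u_{S'}(V)`: the coloring of length `m` whose positions in `S'` all carry color
`u` and whose remaining positions carry, in increasing order of position, the colors
`V_1, …, V_l` (meaningful when `l = m - |S'|`). -/
def sigmaIns {c : ℕ} [NeZero c] {m l : ℕ} (u : Fin c) (S' : Finset (Fin m))
    (V : Fin l → Fin c) : Fin m → Fin c := fun j =>
  if j ∈ S' then u
  else if h : rankInCompl S' j < l then V ⟨rankInCompl S' j, h⟩ else default

/-- `σ(V,S) := σ^u_{S∖{min S}}(V)` where `u = V_{min S}` (meaningful when `V` has
length `l`, `S ⊆ {1,…,l+b}` and `|S| = b+1`, in which case `min S ≤ l`). -/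
def sigmaStep {c : ℕ} [NeZero c] {l m : ℕ} (V : Fin l → Fin c)
    (S : Finset (Fin m)) : Fin m → Fin c :=
  if hS : S.Nonempty then
    sigmaIns (if h : ((S.min' hS : Fin m) : ℕ) < l then V ⟨(S.min' hS : Fin m), h⟩
              else default)
      (S.erase (S.min' hS)) V
  else fun _ => default

/-- The countable set of colorings of all finite lengths, a coloring of length `l`
being a function `{1,…,l} → {1,…,c}`. -/
def Coloring (c : ℕ) : Type := Σ l : ℕ, Fin l → Fin c

instance {c : ℕ} : MeasurableSpace (Coloring c) := ⊤

/-- The particle kernel `κ̂`: from a coloring `V` of length `l`, move to `σ(V,S)` with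
probability `p^l(b)/binom(l+b, b+1)`, for each `b ≥ 1` and each `S ⊆ {1,…,l+b}` with
`|S| = b+1`.  Expressed as a transition mass function on `Coloring c`. -/
noncomputable def particleKernel {c : ℕ} [NeZero c] (p : ℕ → ℕ → ℝ≥0∞) :
    Coloring c → Coloring c → ℝ≥0∞ := fun V W =>
  if V.1 < W.1 then
    (p V.1 (W.1 - V.1) / ((W.1.choose ((W.1 - V.1) + 1) : ℕ) : ℝ≥0∞)) *
      (((Finset.univ.powersetCard ((W.1 - V.1) + 1)).filter
          (fun S : Finset (Fin W.1) => sigmaStep V.2 S = W.2)).card : ℝ≥0∞)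
  else 0

/-- The mass function of `μ_B`, the uniform probability measure on `C_B`, viewed on
the set of colorings of all lengths. -/
noncomputable def unifMass {c : ℕ} (B : Fin c → ℕ) : Coloring c → ℝ≥0∞ := fun V =>
  if countVec V.2 = B then (((colorings V.1 B).card : ℝ≥0∞))⁻¹ else 0

/-- `P` is the law `P^κ_ν` on `E^ℕ` of the Markov chain with initial distribution of
mass function `ν` and transition kernel of mass function `κ` (characterised by its
cylinder probabilities, as produced by the Ionescu–Tulcea construction). -/
def IsChainLaw {E : Type*} [MeasurableSpace E] (P : Measure (ℕ → E))
    (ν : E → ℝ≥0∞) (κ : E → E → ℝ≥0∞) : Prop :=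
  IsProbabilityMeasure P ∧
    ∀ (n : ℕ) (v : ℕ → E),
      P {ω | ∀ i ≤ n, ω i = v i} = ν (v 0) * ∏ i ∈ Finset.range n, κ (v i) (v (i + 1))

lemma sum_mul_eq_of_sum_fiber_eq {ι κ M : Type*} [Fintype ι] [DecidableEq κ]
    [NonUnitalNonAssocSemiring M] (φ : ι → κ) {f g g' : ι → M}
    (hf : ∀ i j, φ i = φ j → f i = f j)
    (hg : ∀ k, ∑ i with φ i = k, g i = ∑ i with φ i = k, g' i) :
    ∑ i, f i * g i = ∑ i, f i * g' i := by
  have hfiber (h : ι → M) (k : κ) (i₀ : ι) (hi₀ : φ i₀ = k) :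
      ∑ i with φ i = k, f i * h i = f i₀ * ∑ i with φ i = k, h i := by
    rw [mul_sum]
    exact sum_congr rfl fun i hi => by rw [hf i i₀ ((mem_filter.1 hi).2.trans hi₀.symm)]
  rw [← sum_fiberwise_of_maps_to (t := univ.image φ) (fun i _ => mem_image_of_mem φ (mem_univ i)),
    ← sum_fiberwise_of_maps_to (t := univ.image φ) (fun i _ => mem_image_of_mem φ (mem_univ i))]
  refine sum_congr rfl fun k hk => ?_
  obtain ⟨i₀, -, hi₀⟩ := mem_image.1 hk
  rw [hfiber g k i₀ hi₀, hfiber g' k i₀ hi₀, hg]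

section Paths

variable {E : Type*} {ν : E → ℝ≥0∞} {κ : E → E → ℝ≥0∞}

noncomputable def pathWeight (ν : E → ℝ≥0∞) (κ : E → E → ℝ≥0∞) {n : ℕ} (g : Fin (n + 1) → E) :
    ℝ≥0∞ :=
  ν (g 0) * ∏ i : Fin n, κ (g i.castSucc) (g i.succ)

lemma pathWeight_snoc {n : ℕ} (g : Fin (n + 1) → E) (w : E) :
    pathWeight ν κ (Fin.snoc g w : Fin (n + 2) → E) = pathWeight ν κ g * κ (g (Fin.last n)) w := by
  simp only [pathWeight, Fin.prod_univ_castSucc, Fin.snoc_castSucc, Fin.succ_castSucc,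
    Fin.snoc_last, Fin.succ_last, mul_assoc]
  rw [← Fin.castSucc_zero, Fin.snoc_castSucc]

end Paths

section MarkovChain

variable {E : Type*} [MeasurableSpace E] {P : Measure (ℕ → E)} {ν : E → ℝ≥0∞}
  {κ : E → E → ℝ≥0∞}

lemma IsChainLaw.measure_cylinder (hP : IsChainLaw P ν κ) {n : ℕ} (g : Fin (n + 1) → E) :
    P {ω | ∀ i : Fin (n + 1), ω i = g i} = pathWeight ν κ g := by
  set v : ℕ → E := fun i => if h : i < n + 1 then g ⟨i, h⟩ else g 0
  have hset : {ω : ℕ → E | ∀ i : Fin (n + 1), ω i = g i} = {ω | ∀ i ≤ n, ω i = v i} := by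
    ext ω
    refine ⟨fun h i hi => ?_, fun h i => (h i (Nat.lt_succ_iff.1 i.isLt)).trans (dif_pos i.isLt)⟩
    simp only [v, dif_pos (Nat.lt_succ_of_le hi)]
    exact h ⟨i, _⟩
  rw [hset, hP.2, pathWeight, ← Fin.prod_univ_eq_prod_range (fun i => κ (v i) (v (i + 1)))]
  simp [v]
  rfl

variable [MeasurableSingletonClass E] [Countable E]

lemma IsChainLaw.measure_eval_eq_tsum (hP : IsChainLaw P ν κ) (n : ℕ) (w : E) :
    P {ω | ω n = w} = ∑' g : Fin n → E, pathWeight ν κ (Fin.snoc g w : Fin (n + 1) → E) := by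
  have hset : {ω : ℕ → E | ω n = w}
      = ⋃ g : Fin n → E, {ω | ∀ i : Fin (n + 1), ω i = (Fin.snoc g w : Fin (n + 1) → E) i} := by
    ext ω
    simp only [Set.mem_iUnion]
    refine ⟨fun h => ⟨fun i : Fin n => ω i, fun i => ?_⟩,
      fun ⟨g, hg⟩ => by simpa using hg (Fin.last n)⟩
    refine Fin.lastCases ?_ (fun j => ?_) i
    · simpa using h
    · simp
  have hdisj : Pairwise (Function.onFun Disjoint fun g : Fin n → E =>
      {ω : ℕ → E | ∀ i : Fin (n + 1), ω i = (Fin.snoc g w : Fin (n + 1) → E) i}) := by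
    refine fun g g' hne => Set.disjoint_left.2 fun ω hg hg' => hne (funext fun j => ?_)
    simpa using (hg j.castSucc).symm.trans (hg' j.castSucc)
  have hmeas (g : Fin (n + 1) → E) : MeasurableSet {ω : ℕ → E | ∀ i : Fin (n + 1), ω i = g i} := by
    simp only [Set.ofPred_forall]
    exact MeasurableSet.iInter fun i => measurable_pi_apply _ (measurableSet_singleton _)
  rw [hset, measure_iUnion hdisj fun g => hmeas _]
  exact tsum_congr fun g => hP.measure_cylinder _

lemma IsChainLaw.measure_eval_zero (hP : IsChainLaw P ν κ) (v : E) : P {ω | ω 0 = v} = ν v := by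
  simp [hP.measure_eval_eq_tsum, pathWeight, Fin.snoc_zero]

lemma IsChainLaw.measure_eval_succ (hP : IsChainLaw P ν κ) (n : ℕ) (w : E) :
    P {ω | ω (n + 1) = w} = ∑' v, P {ω | ω n = v} * κ v w := by
  simp_rw [hP.measure_eval_eq_tsum, pathWeight_snoc, ← ENNReal.tsum_mul_right]
  rw [← (Fin.snocEquiv fun _ => E).tsum_eq, ENNReal.tsum_prod']
  simp only [Fin.snocEquiv_apply, Fin.snoc_last]
  rfl

end MarkovChain

section Rank

variable {m : ℕ} (T : Finset (Fin m))

lemma rankInCompl_lt_card_compl {j : Fin m} (hj : j ∈ Tᶜ) : rankInCompl T j < #Tᶜ :=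
  card_lt_card <| filter_ssubset.2 ⟨j, hj, lt_irrefl j⟩

lemma rankInCompl_strictMonoOn : StrictMonoOn (rankInCompl T) ↑(Tᶜ) := by
  intro j hj j' _ hjj'
  refine card_lt_card <| (ssubset_iff_of_subset fun i hi => ?_).2 ⟨j, ?_, ?_⟩
  · simp only [mem_filter] at hi ⊢
    exact ⟨hi.1, hi.2.trans hjj'⟩
  · exact mem_filter.2 ⟨hj, hjj'⟩
  · simp

lemma exists_rankInCompl_eq {k : ℕ} (hk : k < #Tᶜ) : ∃ j ∈ Tᶜ, rankInCompl T j = k := by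
  have himage : Tᶜ.image (rankInCompl T) = range #Tᶜ := by
    refine eq_of_subset_of_card_le (fun r hr => ?_) ?_
    · obtain ⟨j, hj, rfl⟩ := mem_image.1 hr
      exact mem_range.2 (rankInCompl_lt_card_compl T hj)
    · rw [card_image_of_injOn (rankInCompl_strictMonoOn T).injOn, card_range]
  obtain ⟨j, hj, hjk⟩ := mem_image.1 (himage ▸ mem_range.2 hk : k ∈ Tᶜ.image (rankInCompl T))
  exact ⟨j, hj, hjk⟩

lemma rankInCompl_erase_min' {S : Finset (Fin m)} (hS : S.Nonempty) :
    rankInCompl (S.erase (S.min' hS)) (S.min' hS) = S.min' hS := by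
  have hfilter : ((S.erase (S.min' hS))ᶜ.filter fun i => i < S.min' hS) = Iio (S.min' hS) := by
    ext i
    simp only [mem_filter, mem_compl, mem_erase, mem_Iio, and_iff_right_iff_imp]
    exact fun hi ⟨_, hiS⟩ => (S.min'_le i hiS).not_gt hi
  rw [rankInCompl, hfilter, Fin.card_Iio]

lemma val_min'_lt {l b : ℕ} (hm : l + b = m) {S : Finset (Fin m)} (hS : S.Nonempty)
    (hcard : #S = b + 1) : (S.min' hS : ℕ) < l := by
  have := card_le_card (s := S) (t := Ici (S.min' hS)) fun i hi => mem_Ici.2 (S.min'_le i hi)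
  rw [hcard, Fin.card_Ici] at this
  omega

end Rank

section Counts

variable {c : ℕ}

lemma sum_countVec {l : ℕ} (V : Fin l → Fin c) : ∑ u, countVec V u = l := by
  simpa [countVec] using (card_eq_sum_card_fiberwise fun i (_ : i ∈ univ) => mem_univ (V i)).symm

lemma length_eq_of_countVec_eq {l m : ℕ} {V : Fin l → Fin c} {W : Fin m → Fin c}
    (h : countVec V = countVec W) : l = m := by
  rw [← sum_countVec V, h, sum_countVec]

lemma countVec_eq_sum_ite {l : ℕ} (V : Fin l → Fin c) (u : Fin c) :
    countVec V u = ∑ i, if V i = u then 1 else 0 :=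
  card_filter _ _

end Counts

section Insertion

variable {c : ℕ} [NeZero c] {m l : ℕ} (u : Fin c) (T : Finset (Fin m))

lemma sigmaIns_of_mem (V : Fin l → Fin c) {j : Fin m} (hj : j ∈ T) : sigmaIns u T V j = u := by
  simp [sigmaIns, hj]

lemma sigmaIns_of_notMem (V : Fin l → Fin c) {j : Fin m} (hj : j ∉ T)
    (h : rankInCompl T j < l) : sigmaIns u T V j = V ⟨rankInCompl T j, h⟩ := by
  simp [sigmaIns, hj, h]

lemma sum_compl_sigmaIns {M : Type*} [AddCommMonoid M] (hT : #Tᶜ = l) (V : Fin l → Fin c)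
    (F : Fin c → M) : ∑ j ∈ Tᶜ, F (sigmaIns u T V j) = ∑ k, F (V k) := by
  refine sum_bij (fun j hj => ⟨rankInCompl T j, (rankInCompl_lt_card_compl T hj).trans_eq hT⟩)
    (fun _ _ => mem_univ _) (fun j hj j' hj' h => (rankInCompl_strictMonoOn T).injOn hj hj'
      (congrArg Fin.val h)) (fun k _ => ?_) (fun j hj => ?_)
  · obtain ⟨j, hj, hjk⟩ := exists_rankInCompl_eq T (k.isLt.trans_eq hT.symm)
    exact ⟨j, hj, Fin.ext hjk⟩
  · rw [sigmaIns_of_notMem u T V (mem_compl.1 hj)]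

lemma countVec_sigmaIns (hT : #Tᶜ = l) (V : Fin l → Fin c) :
    countVec (sigmaIns u T V) = countVec V + Pi.single u #T := by
  funext u'
  have hsum_T : ∑ j ∈ T, (if sigmaIns u T V j = u' then 1 else 0)
      = (Pi.single u #T : Fin c → ℕ) u' := by
    rw [sum_congr rfl fun j hj => by rw [sigmaIns_of_mem u T V hj], sum_const, Pi.single_apply]
    split_ifs <;> simp_all [eq_comm]
  rw [Pi.add_apply, countVec_eq_sum_ite, countVec_eq_sum_ite, ← sum_add_sum_compl T, hsum_T,
    sum_compl_sigmaIns u T hT V fun v => if v = u' then 1 else 0, add_comm]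

lemma sigmaIns_injective (hT : #Tᶜ = l) : Function.Injective (sigmaIns (l := l) u T) := by
  intro V V' h
  funext k
  obtain ⟨j, hj, hjk⟩ := exists_rankInCompl_eq T (k.isLt.trans_eq hT.symm)
  have hr : rankInCompl T j < l := hjk ▸ k.isLt
  have hj' := congrFun h j
  rwa [sigmaIns_of_notMem u T V (mem_compl.1 hj) hr, sigmaIns_of_notMem u T V' (mem_compl.1 hj) hr,
    show (⟨rankInCompl T j, hr⟩ : Fin l) = k from Fin.ext hjk] at hj'

lemma exists_sigmaIns_eq (hT : #Tᶜ = l) {w : Fin m → Fin c} (hw : ∀ i ∈ T, w i = u) :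
    ∃ V : Fin l → Fin c, sigmaIns u T V = w := by
  choose e he hek using fun k : Fin l => exists_rankInCompl_eq T (k.isLt.trans_eq hT.symm)
  refine ⟨fun k => w (e k), funext fun j => ?_⟩
  by_cases hj : j ∈ T
  · rw [sigmaIns_of_mem u T _ hj, hw j hj]
  · have hr : rankInCompl T j < l := (rankInCompl_lt_card_compl T (mem_compl.2 hj)).trans_eq hT
    rw [sigmaIns_of_notMem u T _ hj hr]
    exact congrArg w <| (rankInCompl_strictMonoOn T).injOn (he _) (mem_compl.2 hj) (hek _)

lemma sigmaIns_erase_min' {S : Finset (Fin m)} (hS : S.Nonempty) (V : Fin l → Fin c)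
    (hlt : (S.min' hS : ℕ) < l) : sigmaIns u (S.erase (S.min' hS)) V (S.min' hS) = V ⟨_, hlt⟩ := by
  rw [sigmaIns_of_notMem _ _ _ (notMem_erase _ _) (rankInCompl_erase_min' hS ▸ hlt)]
  simp only [rankInCompl_erase_min']

end Insertion

section Step

variable {c : ℕ} [NeZero c] {l m : ℕ}

lemma sigmaStep_eq_sigmaIns (V : Fin l → Fin c) {S : Finset (Fin m)} (hS : S.Nonempty)
    (hlt : (S.min' hS : ℕ) < l) :
    sigmaStep V S = sigmaIns (V ⟨_, hlt⟩) (S.erase (S.min' hS)) V := by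
  rw [sigmaStep, dif_pos hS, dif_pos hlt]

lemma sigmaStep_of_mem (V : Fin l → Fin c) {S : Finset (Fin m)} (hS : S.Nonempty)
    (hlt : (S.min' hS : ℕ) < l) {i : Fin m} (hi : i ∈ S) : sigmaStep V S i = V ⟨_, hlt⟩ := by
  rw [sigmaStep_eq_sigmaIns V hS hlt]
  obtain rfl | hne := eq_or_ne i (S.min' hS)
  · exact sigmaIns_erase_min' _ hS V hlt
  · exact sigmaIns_of_mem _ _ V (mem_erase.2 ⟨hne, hi⟩)

lemma card_compl_erase_min' {b : ℕ} (hm : l + b = m) {S : Finset (Fin m)} (hcard : #S = b + 1)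
    (hS : S.Nonempty) : #(S.erase (S.min' hS))ᶜ = l := by
  rw [card_compl, card_erase_of_mem (S.min'_mem hS), hcard, Fintype.card_fin]
  omega

lemma countVec_sigmaStep {b : ℕ} (hm : l + b = m) {S : Finset (Fin m)} (hcard : #S = b + 1)
    (V : Fin l → Fin c) (hS : S.Nonempty) :
    countVec (sigmaStep V S) = countVec V + Pi.single (V ⟨_, val_min'_lt hm hS hcard⟩) b := by
  rw [sigmaStep_eq_sigmaIns V hS (val_min'_lt hm hS hcard),
    countVec_sigmaIns _ _ (card_compl_erase_min' hm hcard hS),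
    card_erase_of_mem (S.min'_mem hS), hcard, Nat.add_sub_cancel]

lemma sigmaStep_left_injective {b : ℕ} (hm : l + b = m) {S : Finset (Fin m)}
    (hcard : #S = b + 1) : Function.Injective fun V : Fin l → Fin c => sigmaStep V S := by
  intro V V' h
  have hS : S.Nonempty := card_pos.1 (by omega)
  have hlt := val_min'_lt hm hS hcard
  have hmin : V ⟨_, hlt⟩ = V' ⟨_, hlt⟩ := by
    rw [← sigmaStep_of_mem V hS hlt (S.min'_mem hS), ← sigmaStep_of_mem V' hS hlt (S.min'_mem hS)]
    exact congrFun h _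
  apply sigmaIns_injective (V ⟨_, hlt⟩) _ (card_compl_erase_min' hm hcard hS)
  rw [← sigmaStep_eq_sigmaIns V hS hlt, hmin, ← sigmaStep_eq_sigmaIns V' hS hlt]
  exact h

lemma exists_sigmaStep_eq_iff {b : ℕ} (hm : l + b = m) {S : Finset (Fin m)} (hcard : #S = b + 1)
    (A : Fin c → ℕ) (w : Fin m → Fin c) :
    (∃ x ∈ colorings l A, sigmaStep x S = w)
      ↔ ∃ u, (∀ i ∈ S, w i = u) ∧ countVec w = A + Pi.single u b := by
  have hS : S.Nonempty := card_pos.1 (by omega)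
  have hlt := val_min'_lt hm hS hcard
  constructor
  · rintro ⟨x, hx, rfl⟩
    refine ⟨x ⟨_, hlt⟩, fun i hi => sigmaStep_of_mem x hS hlt hi, ?_⟩
    rw [countVec_sigmaStep hm hcard x hS, (mem_filter.1 hx).2]
  · rintro ⟨u, hw, hcount⟩
    obtain ⟨x, hx⟩ := exists_sigmaIns_eq u _ (card_compl_erase_min' hm hcard hS)
      fun i hi => hw i (mem_of_mem_erase hi)
    have hmin : x ⟨_, hlt⟩ = u := by
      rw [← sigmaIns_erase_min' u hS x hlt, hx, hw _ (S.min'_mem hS)]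
    have hstep : sigmaStep x S = w := by rw [sigmaStep_eq_sigmaIns x hS hlt, hmin, hx]
    refine ⟨x, mem_filter.2 ⟨mem_univ _, add_right_cancel (b := Pi.single u b) ?_⟩, hstep⟩
    rw [← hcount, ← hstep, countVec_sigmaStep hm hcard x hS, hmin]

end Step

-- `S` must be a block of `b + 1` positions of `w` of one colour `u`, and `x` is then `w` with
-- `S ∖ {min S}` deleted.
theorem sum_card_sigmaStep_eq {c : ℕ} [NeZero c] {l b m : ℕ} (hm : l + b = m)
    (A : Fin c → ℕ) (w : Fin m → Fin c) :
    ∑ x ∈ colorings l A, #{S ∈ univ.powersetCard (b + 1) | sigmaStep x S = w}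
      = ∑ u, if countVec w = A + Pi.single u b then (countVec w u).choose (b + 1) else 0 := by
  have hleft := card_biUnion (s := colorings l A)
    (t := fun x => {S ∈ univ.powersetCard (b + 1) | sigmaStep x S = w}) fun x _ y _ hxy =>
      disjoint_filter.2 fun S hS hx hy => hxy <|
        sigmaStep_left_injective hm (mem_powersetCard_univ.1 hS) (hx.trans hy.symm)
  have hright := card_biUnion (s := univ)
    (t := fun u => {S ∈ ({i | w i = u} : Finset _).powersetCard (b + 1) |
      countVec w = A + Pi.single u b})
    fun u _ u' _ huu' => disjoint_filter_filter <| disjoint_left.2 fun S hu hu' => by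
      obtain ⟨i, hi⟩ := card_pos.1 ((mem_powersetCard.1 hu).2.trans_gt b.succ_pos)
      exact huu' <| ((mem_filter.1 ((mem_powersetCard.1 hu).1 hi)).2).symm.trans
        (mem_filter.1 ((mem_powersetCard.1 hu').1 hi)).2
  have hcard_block (u : Fin c) :
      #{S ∈ ({i | w i = u} : Finset _).powersetCard (b + 1) | countVec w = A + Pi.single u b}
        = if countVec w = A + Pi.single u b then (countVec w u).choose (b + 1) else 0 := by
    split_ifs with h <;> simp [h, card_powersetCard, countVec]
  rw [← hleft, ← sum_congr rfl fun u _ => hcard_block u, ← hright]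
  congr 1
  ext S
  simp only [mem_biUnion, mem_filter, mem_powersetCard_univ, mem_univ, true_and]
  simp only [mem_powersetCard, subset_iff, mem_filter, mem_univ, true_and]
  constructor
  · rintro ⟨x, hx, hcard, hxS⟩
    obtain ⟨u, hw, hcount⟩ := (exists_sigmaStep_eq_iff hm hcard A w).1 ⟨x, hx, hxS⟩
    exact ⟨u, ⟨hw, hcard⟩, hcount⟩
  · rintro ⟨u, ⟨hw, hcard⟩, hcount⟩
    obtain ⟨x, hx, hxS⟩ := (exists_sigmaStep_eq_iff hm hcard A w).2 ⟨u, hw, hcount⟩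
    exact ⟨x, hx, hcard, hxS⟩

instance {c : ℕ} : Countable (Coloring c) :=
  inferInstanceAs (Countable (Σ l : ℕ, Fin l → Fin c))

instance {c : ℕ} : MeasurableSingletonClass (Coloring c) :=
  ⟨fun _ => MeasurableSpace.measurableSet_top⟩

def CountInvariant {c : ℕ} (f : Coloring c → ℝ≥0∞) : Prop :=
  ∀ V W : Coloring c, countVec V.2 = countVec W.2 → f V = f W

lemma countInvariant_unifMass {c : ℕ} (B : Fin c → ℕ) : CountInvariant (unifMass B) := by
  rintro ⟨l, V⟩ ⟨m, W⟩ (h : countVec V = countVec W)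
  obtain rfl := length_eq_of_countVec_eq h
  simp only [unifMass, h]

lemma sum_mul_particleKernel_eq {c : ℕ} [NeZero c] (p : ℕ → ℕ → ℝ≥0∞) {l m : ℕ}
    {f : (Fin l → Fin c) → ℝ≥0∞} (hf : ∀ x y, countVec x = countVec y → f x = f y)
    {w w' : Fin m → Fin c} (hww : countVec w = countVec w') :
    ∑ x, f x * particleKernel p ⟨l, x⟩ ⟨m, w⟩ = ∑ x, f x * particleKernel p ⟨l, x⟩ ⟨m, w'⟩ := by
  by_cases hl : l < m
  · simp only [particleKernel, if_pos hl]
    simp_rw [mul_left_comm (f _)]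
    rw [← mul_sum, ← mul_sum]
    congr 1
    refine sum_mul_eq_of_sum_fiber_eq countVec hf fun A => ?_
    have hm : l + (m - l) = m := by omega
    simp only [← Nat.cast_sum]
    rw [← colorings, sum_card_sigmaStep_eq hm, sum_card_sigmaStep_eq hm, hww]
  · simp [particleKernel, hl]

lemma CountInvariant.tsum_mul_particleKernel {c : ℕ} [NeZero c] {f : Coloring c → ℝ≥0∞}
    (hf : CountInvariant f) (p : ℕ → ℕ → ℝ≥0∞) :
    CountInvariant fun W => ∑' V, f V * particleKernel p V W := by
  rintro ⟨m, w⟩ ⟨m', w'⟩ (hww : countVec w = countVec w')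
  obtain rfl := length_eq_of_countVec_eq hww
  refine (ENNReal.tsum_sigma' _).trans <|
    (tsum_congr fun l => ?_).trans (ENNReal.tsum_sigma' _).symm
  rw [tsum_fintype, tsum_fintype]
  exact sum_mul_particleKernel_eq p (fun x y h => hf ⟨l, x⟩ ⟨l, y⟩ h) hww

lemma IsChainLaw.countInvariant_measure_eval {c : ℕ} [NeZero c] {P : Measure (ℕ → Coloring c)}
    {ν : Coloring c → ℝ≥0∞} {p : ℕ → ℕ → ℝ≥0∞} (hP : IsChainLaw P ν (particleKernel p))
    (hν : CountInvariant ν) (n : ℕ) : CountInvariant fun V => P {ω | ω n = V} := by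
  induction n with
  | zero => simpa only [hP.measure_eval_zero] using hν
  | succ n ih => simpa only [hP.measure_eval_succ] using ih.tsum_mul_particleKernel p

lemma countVec_eq_iff_exists_mem_colorings {c l : ℕ} (V : Coloring c) (w : Fin l → Fin c) :
    countVec V.2 = countVec w ↔ ∃ x ∈ colorings l (countVec w), V = ⟨l, x⟩ := by
  obtain ⟨m, y⟩ := V
  constructor
  · intro (h : countVec y = countVec w)
    obtain rfl := length_eq_of_countVec_eq h
    exact ⟨y, mem_filter.2 ⟨mem_univ _, h⟩, rfl⟩
  · rintro ⟨x, hx, h⟩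
    obtain ⟨rfl, h⟩ := Sigma.mk.inj_iff.1 h
    cases h
    exact (mem_filter.1 hx).2

lemma measure_countVec_eval_eq_sum {c : ℕ} (P : Measure (ℕ → Coloring c)) (n : ℕ) {l : ℕ}
    (w : Fin l → Fin c) :
    P {ω | countVec (ω n).2 = countVec w}
      = ∑ x ∈ colorings l (countVec w), P {ω | ω n = ⟨l, x⟩} := by
  have hset : {ω : ℕ → Coloring c | countVec (ω n).2 = countVec w}
      = ⋃ x ∈ colorings l (countVec w), {ω | ω n = ⟨l, x⟩} := by
    ext ω
    simpa using countVec_eq_iff_exists_mem_colorings (ω n) w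
  rw [hset, measure_biUnion_finset]
  · intro x _ y _ hxy
    exact Set.disjoint_left.2 fun ω hx hy =>
      hxy (eq_of_heq (Sigma.mk.inj_iff.1 (hx.symm.trans hy)).2)
  · exact fun x _ => measurable_pi_apply n (measurableSet_singleton _)

theorem conditional_uniformity_general {c : ℕ} [NeZero c] (p : ℕ → ℕ → ℝ≥0∞)
    (B0 : Fin c → ℕ)
    (P : Measure (ℕ → Coloring c))
    (hP : IsChainLaw P (unifMass B0) (particleKernel p)) :
    ∀ (n : ℕ) (v : Coloring c),
      P {ω | ω n = v} * ((colorings v.1 (countVec v.2)).card : ℝ≥0∞)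
        = P {ω | countVec (ω n).2 = countVec v.2} := by
  intro n v
  have hinv := hP.countInvariant_measure_eval (countInvariant_unifMass B0) n
  rw [measure_countVec_eval_eq_sum P n v.2]
  refine ((sum_congr rfl fun x hx => hinv ⟨v.1, x⟩ v (mem_filter.1 hx).2).trans ?_).symm
  rw [sum_const, nsmul_eq_mul, mul_comm]
  rfl

/-- Conditional uniformity of the particle system given its counts (Proposition
`prop-inter`(2)): if `(V_n)` is the Markov chain with kernel `κ̂` and initial law
`μ_{B(0)}`, then for every `n` and every coloring `v`,
`P(V_n = v)·|C_{Φ(v)}| = P(Φ(V_n) = Φ(v))`; i.e. conditionally on its count vector,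
`V_n` is uniformly distributed on the colorings with that count vector. -/
theorem conditional_uniformity {c : ℕ} [NeZero c] (p : ℕ → ℕ → ℝ≥0∞)
    (hp : ∀ l, 1 ≤ l → p l 0 = 0 ∧ (Function.support (p l)).Finite ∧ ∑' b, p l b = 1)
    (B0 : Fin c → ℕ) (hB0 : 1 ≤ ∑ u, B0 u)
    (P : Measure (ℕ → Coloring c))
    (hP : IsChainLaw P (unifMass B0) (particleKernel p)) :
    ∀ (n : ℕ) (v : Coloring c),
      P {ω | ω n = v} * ((colorings v.1 (countVec v.2)).card : ℝ≥0∞)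
        = P {ω | countVec (ω n).2 = countVec v.2} :=
  conditional_uniformity_general p B0 P hP
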